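/- Let u_T : ℝ → ℝ be Lipschitz and set u_T^* := S_T^+(S_T^- u_T). Then u_T^* is a viscosity solution of the obstacle problem min{ v − u_T, −∂ₓₓv + (T·H''(∂ₓv))⁻¹ } = 0 on ℝ; that is, u_T^* is both a viscosity supersolution and a viscosity subsolution of this equation. -/

import Mathlib

/-!
Strict convexity and superlinearity make `H'` an increasing bijection of `ℝ`. With `P = (H')⁻¹`
the Legendre transform is `L q = q P q - H (P q)`, so `L' = P` and `L'' = 1 / H''(P)`.

Put `w = S_T^- u_T` and `v = S_T^+ w`; both extrema are attained. If `y` realizes `v x₀`, the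
characteristic `x ↦ w y + T L ((x - y) / T)` lies above `v` and touches it at `x₀`, so its second
derivative `1 / (T H''(φ' x₀))` dominates that of any test function touching `v` from below.

Strict convexity of `L` makes the feet `y` of `v` monotone in `x`. Every `y` is the foot of some
point `z` where `v z = u_T z`, namely a maximizer in `w y`. If `v x₀ > u_T x₀` and `y` is a foot of
`x₀`, a compactness argument gives such contact points `z₁ < x₀ < z₂` with foot `y`; by monotonicity
`v` equals the characteristic on `(z₁, z₂)`, whence the subsolution inequality.
-/

open Filter

noncomputable section

/-- A real function is Lipschitz (with some constant). -/
def IsLip1 (f : ℝ → ℝ) : Prop := ∃ K : NNReal, LipschitzWith K f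

/-- The Legendre transform `L(q) = sup_p (q·p - H(p))`. -/
def legendre1 (H : ℝ → ℝ) (q : ℝ) : ℝ := ⨆ p : ℝ, (q * p - H p)

/-- The forward Hopf–Lax operator `(S_T^+ g)(x) = inf_y [g(y) + T·L((x-y)/T)]`. -/
def Splus1 (T : ℝ) (L : ℝ → ℝ) (g : ℝ → ℝ) (x : ℝ) : ℝ :=
  ⨅ y : ℝ, (g y + T * L ((x - y) / T))

/-- The backward operator `(S_T^- g)(x) = sup_y [g(y) - T·L((y-x)/T)]`. -/
def Sminus1 (T : ℝ) (L : ℝ → ℝ) (g : ℝ → ℝ) (x : ℝ) : ℝ :=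
  ⨆ y : ℝ, (g y - T * L ((y - x) / T))

/-- `v` is a viscosity supersolution of `min{v - u_T, -∂ₓₓv + (T·H''(∂ₓv))⁻¹} = 0`. -/
def ViscSuper1 (T : ℝ) (H uT v : ℝ → ℝ) : Prop :=
  ∀ φ : ℝ → ℝ, ContDiff ℝ 2 φ → ∀ x0 : ℝ,
    IsLocalMin (fun x => v x - φ x) x0 → v x0 = φ x0 →
    uT x0 ≤ φ x0 ∧ deriv (deriv φ) x0 ≤ 1 / (T * deriv (deriv H) (deriv φ x0))

/-- `v` is a viscosity subsolution of `min{v - u_T, -∂ₓₓv + (T·H''(∂ₓv))⁻¹} = 0`. -/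
def ViscSub1 (T : ℝ) (H uT v : ℝ → ℝ) : Prop :=
  ∀ φ : ℝ → ℝ, ContDiff ℝ 2 φ → ∀ x0 : ℝ,
    IsLocalMax (fun x => v x - φ x) x0 → v x0 = φ x0 →
    φ x0 ≤ uT x0 ∨ 1 / (T * deriv (deriv H) (deriv φ x0)) ≤ deriv (deriv φ) x0

open Set Topology

def Superlinear (L : ℝ → ℝ) : Prop := ∀ M, ∃ C, ∀ q, M * |q| - C ≤ L q

section Hamiltonian

variable {H : ℝ → ℝ}

theorem add_deriv_mul_le_of_monotone_deriv (hH : Differentiable ℝ H) (hmono : Monotone (deriv H))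
    (p₀ p : ℝ) : H p₀ + deriv H p₀ * (p - p₀) ≤ H p := by
  have hconv : ConvexOn ℝ univ H := Monotone.convexOn_univ_of_deriv hH hmono
  rcases lt_trichotomy p p₀ with h | rfl | h
  · have := hconv.slope_le_deriv (mem_univ p) (mem_univ p₀) h (hH p₀)
    rw [slope_def_field, div_le_iff₀ (sub_pos.2 h)] at this
    linarith
  · simp
  · have := hconv.deriv_le_slope (mem_univ p₀) (mem_univ p) h (hH p₀)
    rw [slope_def_field, le_div_iff₀ (sub_pos.2 h)] at this
    linarith

theorem tendsto_deriv_atTop_of_superlinear (hH : Differentiable ℝ H)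
    (hmono : Monotone (deriv H)) (hsuper : Tendsto (fun p => H p / |p|) atTop atTop) :
    Tendsto (deriv H) atTop atTop := by
  have hlim : Tendsto (fun p => H p / |p| + -H 0 / p) atTop atTop :=
    hsuper.atTop_add (tendsto_const_nhds.div_atTop tendsto_id)
  refine tendsto_atTop_mono' _ ?_ hlim
  filter_upwards [eventually_gt_atTop 0] with p hp
  have := add_deriv_mul_le_of_monotone_deriv hH hmono p 0
  rw [abs_of_pos hp, ← add_div, div_le_iff₀ hp]
  linarith

theorem tendsto_deriv_atBot_of_superlinear (hH : Differentiable ℝ H)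
    (hmono : Monotone (deriv H)) (hsuper : Tendsto (fun p => H p / |p|) atBot atTop) :
    Tendsto (deriv H) atBot atBot := by
  have hlim : Tendsto (fun p => -(H p / |p|) + -H 0 / p) atBot atBot :=
    (tendsto_neg_atTop_atBot.comp hsuper).atBot_add (tendsto_const_nhds.div_atBot tendsto_id)
  refine tendsto_atBot_mono' _ ?_ hlim
  filter_upwards [eventually_lt_atBot 0] with p hp
  have := add_deriv_mul_le_of_monotone_deriv hH hmono p 0
  rw [abs_of_neg hp, div_neg, neg_neg, ← add_div, le_div_iff_of_neg hp]
  linarith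

theorem exists_strictMono_rightInverse_deriv (hH : ContDiff ℝ 2 H)
    (hconv : ∀ p, 0 < deriv (deriv H) p)
    (hsuper : Tendsto (fun p => H p / |p|) (cocompact ℝ) atTop) :
    ∃ P : ℝ → ℝ, StrictMono P ∧ (∀ q, deriv H (P q) = q) ∧
      ∀ q, HasDerivAt P (deriv (deriv H) (P q))⁻¹ q := by
  have hHd : Differentiable ℝ H := hH.differentiable two_ne_zero
  have hH' : Differentiable ℝ (deriv H) := hH.differentiable_deriv_two
  have hmono : StrictMono (deriv H) := strictMono_of_deriv_pos hconv
  rw [cocompact_eq_atBot_atTop, tendsto_sup] at hsuper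
  have hsurj : Function.Surjective (deriv H) := hH'.continuous.surjective
    (tendsto_deriv_atTop_of_superlinear hHd hmono.monotone hsuper.2)
    (tendsto_deriv_atBot_of_superlinear hHd hmono.monotone hsuper.1)
  let e := StrictMono.orderIsoOfSurjective (deriv H) hmono hsurj
  refine ⟨e.symm, e.symm.strictMono, e.apply_symm_apply, fun q => ?_⟩
  exact HasDerivAt.of_local_left_inverse e.symm.continuous.continuousAt (hH' _).hasDerivAt
    (hconv _).ne' (Eventually.of_forall e.apply_symm_apply)

variable {P : ℝ → ℝ}

theorem isGreatest_legendre1 (hH : Differentiable ℝ H) (hmono : Monotone (deriv H))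
    (hP : ∀ q, deriv H (P q) = q) (q : ℝ) :
    IsGreatest (range fun p => q * p - H p) (q * P q - H (P q)) := by
  refine ⟨⟨P q, rfl⟩, ?_⟩
  rintro _ ⟨p, rfl⟩
  have := add_deriv_mul_le_of_monotone_deriv hH hmono (P q) p
  rw [hP] at this
  linarith

theorem legendre1_eq (hH : Differentiable ℝ H) (hmono : Monotone (deriv H))
    (hP : ∀ q, deriv H (P q) = q) (q : ℝ) : legendre1 H q = q * P q - H (P q) :=
  (isGreatest_legendre1 hH hmono hP q).csSup_eq

theorem le_legendre1 (hH : Differentiable ℝ H) (hmono : Monotone (deriv H))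
    (hP : ∀ q, deriv H (P q) = q) (q p : ℝ) : q * p - H p ≤ legendre1 H q := by
  rw [legendre1_eq hH hmono hP]
  exact (isGreatest_legendre1 hH hmono hP q).2 ⟨p, rfl⟩

theorem hasDerivAt_legendre1 (hH : Differentiable ℝ H) (hmono : Monotone (deriv H))
    (hP : ∀ q, deriv H (P q) = q) {q P' : ℝ} (hPd : HasDerivAt P P' q) :
    HasDerivAt (legendre1 H) (P q) q := by
  rw [funext (legendre1_eq hH hmono hP)]
  have h := ((hasDerivAt_id' q).mul hPd).sub ((hH (P q)).hasDerivAt.comp q hPd)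
  rw [hP] at h
  exact h.congr_deriv (by ring)

theorem superlinear_legendre1 (hH : Differentiable ℝ H) (hmono : Monotone (deriv H))
    (hP : ∀ q, deriv H (P q) = q) : Superlinear (legendre1 H) := fun M => by
  refine ⟨max (H M) (H (-M)), fun q => ?_⟩
  rcases le_total 0 q with hq | hq
  · have := le_legendre1 hH hmono hP q M
    rw [abs_of_nonneg hq]
    linarith [le_max_left (H M) (H (-M))]
  · have := le_legendre1 hH hmono hP q (-M)
    rw [abs_of_nonpos hq]
    linarith [le_max_right (H M) (H (-M))]

end Hamiltonian

theorem strictMono_sub_comp_add {f f' : ℝ → ℝ} (hf : ∀ x, HasDerivAt f (f' x) x)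
    (hf' : StrictMono f') {h : ℝ} (hh : 0 < h) : StrictMono fun x => f (x + h) - f x :=
  strictMono_of_deriv_pos fun x => by
    have hd : HasDerivAt (fun x => f (x + h) - f x) (f' (x + h) - f' x) x :=
      (HasDerivAt.comp_add_const x h (hf (x + h))).sub (hf x)
    rw [hd.deriv]
    exact sub_pos.2 (hf' (lt_add_of_pos_right x hh))

theorem IsLocalMin.nonneg_of_hasDerivAt {g g' : ℝ → ℝ} {x₀ c : ℝ} (hmin : IsLocalMin g x₀)
    (hg : ∀ x, HasDerivAt g (g' x) x) (hg' : HasDerivAt g' c x₀) : 0 ≤ c := by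
  by_contra! hc
  have hderiv : deriv g = g' := funext fun x => (hg x).deriv
  have hmax : IsLocalMax g x₀ := isLocalMax_of_deriv_deriv_neg (by rwa [hderiv, hg'.deriv])
    (by rw [hderiv]; exact hmin.hasDerivAt_eq_zero (hg x₀)) (hg x₀).continuousAt
  have hconst : ∀ᶠ x in 𝓝 x₀, g x = g x₀ := (hmin.and hmax).mono fun x hx => le_antisymm hx.2 hx.1
  have hzero : g' =ᶠ[𝓝 x₀] fun _ => 0 := by
    filter_upwards [hconst.eventually_nhds] with x hx
    rw [← (hg x).deriv, EventuallyEq.deriv_eq (hx : g =ᶠ[𝓝 x] fun _ => g x₀), deriv_const]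
  exact hc.ne (hg'.unique ((hasDerivAt_const x₀ 0).congr_of_eventuallyEq hzero))

theorem IsLocalMin.hasDerivAt_eq_and_le_of_sub {f g f' g' : ℝ → ℝ} {x₀ a b : ℝ}
    (hmin : IsLocalMin (fun x => f x - g x) x₀) (hf : ∀ x, HasDerivAt f (f' x) x)
    (hg : ∀ x, HasDerivAt g (g' x) x) (hf' : HasDerivAt f' a x₀) (hg' : HasDerivAt g' b x₀) :
    f' x₀ = g' x₀ ∧ b ≤ a :=
  ⟨sub_eq_zero.1 (hmin.hasDerivAt_eq_zero ((hf x₀).sub (hg x₀))),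
    sub_nonneg.1 (hmin.nonneg_of_hasDerivAt (fun x => (hf x).sub (hg x)) (hf'.sub hg'))⟩

theorem IsCompact.exists_mem_of_mem_closure {X Y : Type*} [TopologicalSpace X]
    [TopologicalSpace Y] {K : Set X} (hK : IsCompact K) {F : Set (X × Y)} (hF : IsClosed F)
    {S : Set Y} (hS : ∀ y ∈ S, ∃ x ∈ K, (x, y) ∈ F) {y : Y} (hy : y ∈ closure S) :
    ∃ x ∈ K, (x, y) ∈ F := by
  have : CompactSpace K := isCompact_iff_compactSpace.mp hK
  have hA : IsClosed (Prod.snd '' {p : K × Y | ((p.1 : X), p.2) ∈ F}) :=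
    isClosedMap_snd_of_compactSpace _ (hF.preimage (continuous_subtype_val.prodMap continuous_id))
  have hSA : S ⊆ Prod.snd '' {p : K × Y | ((p.1 : X), p.2) ∈ F} := fun y' hy' => by
    obtain ⟨x, hx, hxF⟩ := hS y' hy'
    exact ⟨(⟨x, hx⟩, y'), hxF, rfl⟩
  obtain ⟨⟨⟨x, hx⟩, _⟩, hxF, rfl⟩ := closure_minimal hSA hA hy
  exact ⟨x, hx, hxF⟩

section MonotoneRelation

variable {G : Set (ℝ × ℝ)} {C : Set ℝ} {R x₀ y₀ : ℝ}

theorem exists_ge_of_monotone_rel (hG : IsClosed G) (hC : IsClosed C)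
    (hmono : ∀ p ∈ G, ∀ q ∈ G, p.1 < q.1 → p.2 ≤ q.2)
    (hcontact : ∀ y, ∃ z ∈ C, |z - y| ≤ R ∧ (z, y) ∈ G) (h₀ : (x₀, y₀) ∈ G) :
    ∃ z ∈ C, x₀ ≤ z ∧ (z, y₀) ∈ G := by
  have hS : ∀ y ∈ Ioc y₀ (y₀ + 1), ∃ z ∈ Icc x₀ (y₀ + 1 + R), (z, y) ∈ G ∩ C ×ˢ univ := by
    rintro y ⟨hy₀, hy₁⟩
    obtain ⟨z, hzC, hzy, hzG⟩ := hcontact y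
    have hxz : x₀ ≤ z := by
      by_contra! h
      exact (hmono _ hzG _ h₀ h).not_gt hy₀
    exact ⟨z, ⟨hxz, by linarith [(abs_le.1 hzy).2]⟩, hzG, hzC, trivial⟩
  have hy₀ : y₀ ∈ closure (Ioc y₀ (y₀ + 1)) := by
    rw [closure_Ioc (by linarith)]
    exact left_mem_Icc.2 (by linarith)
  obtain ⟨z, hz, hzG, hzC, -⟩ :=
    isCompact_Icc.exists_mem_of_mem_closure (hG.inter (hC.prod isClosed_univ)) hS hy₀
  exact ⟨z, hzC, hz.1, hzG⟩

theorem exists_le_of_monotone_rel (hG : IsClosed G) (hC : IsClosed C)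
    (hmono : ∀ p ∈ G, ∀ q ∈ G, p.1 < q.1 → p.2 ≤ q.2)
    (hcontact : ∀ y, ∃ z ∈ C, |z - y| ≤ R ∧ (z, y) ∈ G) (h₀ : (x₀, y₀) ∈ G) :
    ∃ z ∈ C, z ≤ x₀ ∧ (z, y₀) ∈ G := by
  have hcontact' : ∀ y, ∃ z ∈ Neg.neg ⁻¹' C, |z - y| ≤ R ∧ (z, y) ∈ Neg.neg ⁻¹' G := fun y => by
    obtain ⟨z, hzC, hzy, hzG⟩ := hcontact (-y)
    refine ⟨-z, by simpa using hzC, ?_, by simpa using hzG⟩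
    rwa [show -z - y = -(z - -y) by ring, abs_neg]
  obtain ⟨z, hzC, hz, hzG⟩ := exists_ge_of_monotone_rel (x₀ := -x₀) (y₀ := -y₀)
    (hG.preimage continuous_neg) (hC.preimage continuous_neg)
    (fun p hp q hq hpq => neg_le_neg_iff.1 (hmono _ hq _ hp (neg_lt_neg hpq)))
    hcontact' (by simpa using h₀)
  exact ⟨-z, hzC, by linarith, by simpa using hzG⟩

end MonotoneRelation

section HopfLax

variable {T : ℝ} {L g : ℝ → ℝ} {K : NNReal}

theorem exists_le_mul_comp_div (hT : 0 < T) (hL : Superlinear L) (M : ℝ) :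
    ∃ C, ∀ r, M * |r| - C ≤ T * L (r / T) := by
  obtain ⟨C, hC⟩ := hL M
  refine ⟨T * C, fun r => ?_⟩
  calc M * |r| - T * C = T * (M * |r / T| - C) := by
        rw [abs_div, abs_of_pos hT]
        field_simp
    _ ≤ T * L (r / T) := by gcongr; exact hC _

theorem exists_sub_le_sub_abs (hT : 0 < T) (hL : Superlinear L)
    (hg : LipschitzWith K g) : ∃ C, ∀ y z, g z - T * L ((z - y) / T) ≤ g y + C - |z - y| := by
  obtain ⟨C, hC⟩ := exists_le_mul_comp_div hT hL (K + 1)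
  refine ⟨C, fun y z => ?_⟩
  have := hg.le_add_mul z y
  rw [Real.dist_eq] at this
  linarith [hC (z - y)]

theorem exists_add_abs_le_add (hT : 0 < T) (hL : Superlinear L)
    (hg : LipschitzWith K g) : ∃ C, ∀ x y, g x - C + |x - y| ≤ g y + T * L ((x - y) / T) := by
  obtain ⟨C, hC⟩ := exists_le_mul_comp_div hT hL (K + 1)
  refine ⟨C, fun x y => ?_⟩
  have := hg.le_add_mul x y
  rw [Real.dist_eq] at this
  linarith [hC (x - y)]

theorem bddAbove_Sminus1 (hT : 0 < T) (hL : Superlinear L)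
    (hg : LipschitzWith K g) (y : ℝ) : BddAbove (range fun z => g z - T * L ((z - y) / T)) := by
  obtain ⟨C, hC⟩ := exists_sub_le_sub_abs hT hL hg
  refine ⟨g y + C, ?_⟩
  rintro _ ⟨z, rfl⟩
  linarith [hC y z, abs_nonneg (z - y)]

theorem bddBelow_Splus1 (hT : 0 < T) (hL : Superlinear L)
    (hg : LipschitzWith K g) (x : ℝ) : BddBelow (range fun y => g y + T * L ((x - y) / T)) := by
  obtain ⟨C, hC⟩ := exists_add_abs_le_add hT hL hg
  refine ⟨g x - C, ?_⟩
  rintro _ ⟨y, rfl⟩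
  linarith [hC x y, abs_nonneg (x - y)]

theorem Continuous.exists_forall_ge_of_le_sub_abs {f : ℝ → ℝ} (hf : Continuous f) {y C : ℝ}
    (hC : ∀ z, f z ≤ C - |z - y|) : ∃ z, |z - y| ≤ C - f y ∧ ∀ z', f z' ≤ f z := by
  obtain ⟨z, hz⟩ := hf.exists_forall_ge' y (by
    filter_upwards [(isCompact_closedBall y (C - f y)).compl_mem_cocompact] with z hz
    have : C - f y < |z - y| := by simpa [Real.dist_eq] using hz
    linarith [hC z])
  exact ⟨z, by linarith [hC z, hz y], hz⟩

theorem Continuous.exists_forall_le_of_add_abs_le {f : ℝ → ℝ} (hf : Continuous f) {y C : ℝ}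
    (hC : ∀ z, C + |z - y| ≤ f z) : ∃ z, ∀ z', f z ≤ f z' := by
  obtain ⟨z, -, hz⟩ := hf.neg.exists_forall_ge_of_le_sub_abs (C := -C) (y := y)
    fun z => by simp only [Pi.neg_apply]; linarith [hC z]
  exact ⟨z, fun z' => neg_le_neg_iff.1 (hz z')⟩

theorem exists_Sminus1_eq (hT : 0 < T) (hLc : Continuous L)
    (hL : Superlinear L) (hg : LipschitzWith K g) :
    ∃ R, ∀ y, ∃ z, |z - y| ≤ R ∧ Sminus1 T L g y = g z - T * L ((z - y) / T) := by
  obtain ⟨C, hC⟩ := exists_sub_le_sub_abs hT hL hg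
  refine ⟨C + T * L 0, fun y => ?_⟩
  have hgc := hg.continuous
  obtain ⟨z, hzy, hz⟩ := Continuous.exists_forall_ge_of_le_sub_abs
    (f := fun z => g z - T * L ((z - y) / T)) (by fun_prop) (C := g y + C) (hC y)
  refine ⟨z, by simp only [sub_self, zero_div] at hzy; linarith, ?_⟩
  exact le_antisymm (ciSup_le hz) (le_ciSup (bddAbove_Sminus1 hT hL hg y) z)

theorem exists_Splus1_eq (hT : 0 < T) (hLc : Continuous L)
    (hL : Superlinear L) (hg : LipschitzWith K g) (x : ℝ) :
    ∃ y, Splus1 T L g x = g y + T * L ((x - y) / T) := by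
  obtain ⟨C, hC⟩ := exists_add_abs_le_add hT hL hg
  have hgc := hg.continuous
  obtain ⟨y, hy⟩ := Continuous.exists_forall_le_of_add_abs_le
    (f := fun y => g y + T * L ((x - y) / T)) (by fun_prop) (C := g x - C) (y := x)
    fun y => by rw [abs_sub_comm]; exact hC x y
  exact ⟨y, le_antisymm (ciInf_le (bddBelow_Splus1 hT hL hg x) y) (le_ciInf hy)⟩

theorem lipschitzWith_Sminus1 (hT : 0 < T) (hL : Superlinear L)
    (hg : LipschitzWith K g) : LipschitzWith K (Sminus1 T L g) := by
  refine LipschitzWith.of_le_add_mul K fun a b => ciSup_le fun z => ?_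
  have hdist : dist z (z + (b - a)) = dist a b := by
    rw [Real.dist_eq, Real.dist_eq, show z - (z + (b - a)) = a - b by ring]
  calc g z - T * L ((z - a) / T)
      ≤ g (z + (b - a)) - T * L ((z + (b - a) - b) / T) + K * dist a b := by
        rw [show z + (b - a) - b = z - a by ring, ← hdist]
        linarith [hg.le_add_mul z (z + (b - a))]
    _ ≤ Sminus1 T L g b + K * dist a b := by
        gcongr
        exact le_ciSup (bddAbove_Sminus1 hT hL hg b) _

theorem lipschitzWith_Splus1 (hT : 0 < T) (hL : Superlinear L)
    (hg : LipschitzWith K g) : LipschitzWith K (Splus1 T L g) := by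
  refine LipschitzWith.of_le_add_mul K fun a b => ?_
  rw [← sub_le_iff_le_add]
  refine le_ciInf fun y => ?_
  have hle : Splus1 T L g a ≤ g (y + (a - b)) + T * L ((a - (y + (a - b))) / T) :=
    ciInf_le (bddBelow_Splus1 hT hL hg a) _
  have hdist : dist (y + (a - b)) y = dist a b := by
    rw [Real.dist_eq, Real.dist_eq, show y + (a - b) - y = a - b by ring]
  have hlip := hg.le_add_mul (y + (a - b)) y
  rw [show a - (y + (a - b)) = b - y by ring] at hle
  rw [hdist] at hlip
  linarith

theorem le_Splus1_Sminus1 (hT : 0 < T) (hL : Superlinear L)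
    (hg : LipschitzWith K g) (x : ℝ) : g x ≤ Splus1 T L (Sminus1 T L g) x :=
  le_ciInf fun y => by
    have : g x - T * L ((x - y) / T) ≤ Sminus1 T L g y := le_ciSup (bddAbove_Sminus1 hT hL hg y) x
    linarith

theorem exists_contact_Splus1_Sminus1 (hT : 0 < T) (hLc : Continuous L)
    (hL : Superlinear L) (hg : LipschitzWith K g) :
    ∃ R, ∀ y, ∃ z, |z - y| ≤ R ∧ Splus1 T L (Sminus1 T L g) z = g z ∧
      Splus1 T L (Sminus1 T L g) z = Sminus1 T L g y + T * L ((z - y) / T) := by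
  obtain ⟨R, hR⟩ := exists_Sminus1_eq hT hLc hL hg
  refine ⟨R, fun y => ?_⟩
  obtain ⟨z, hzy, hz⟩ := hR y
  have hle : Splus1 T L (Sminus1 T L g) z ≤ Sminus1 T L g y + T * L ((z - y) / T) :=
    ciInf_le (bddBelow_Splus1 hT hL (lipschitzWith_Sminus1 hT hL hg) z) y
  have hge := le_Splus1_Sminus1 hT hL hg z
  exact ⟨z, hzy, by linarith, by linarith⟩

theorem le_of_Splus1_eq_of_lt (hT : 0 < T)
    (hinc : ∀ h, 0 < h → StrictMono fun q => L (q + h) - L q)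
    (hbdd : ∀ x, BddBelow (range fun y => g y + T * L ((x - y) / T))) {x₁ x₂ y₁ y₂ : ℝ}
    (h₁ : Splus1 T L g x₁ = g y₁ + T * L ((x₁ - y₁) / T))
    (h₂ : Splus1 T L g x₂ = g y₂ + T * L ((x₂ - y₂) / T)) (hx : x₁ < x₂) : y₁ ≤ y₂ := by
  by_contra! hy
  have c₁ : Splus1 T L g x₁ ≤ g y₂ + T * L ((x₁ - y₂) / T) := ciInf_le (hbdd x₁) y₂
  have c₂ : Splus1 T L g x₂ ≤ g y₁ + T * L ((x₂ - y₁) / T) := ciInf_le (hbdd x₂) y₁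
  have key := hinc ((x₂ - x₁) / T) (div_pos (sub_pos.2 hx) hT)
    (div_lt_div_of_pos_right (sub_lt_sub_left hy x₁) hT)
  simp only [show ∀ y, (x₁ - y) / T + (x₂ - x₁) / T = (x₂ - y) / T from fun y => by ring] at key
  nlinarith [mul_lt_mul_of_pos_left key hT]

end HopfLax

section Viscosity

variable {T : ℝ} {H L P u : ℝ → ℝ} {K : NNReal}

theorem hasDerivAt_add_mul_comp_sub_div {L' : ℝ → ℝ} (hT : T ≠ 0)
    (hL : ∀ q, HasDerivAt L (L' q) q) (c y x : ℝ) :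
    HasDerivAt (fun x => c + T * L ((x - y) / T)) (L' ((x - y) / T)) x := by
  have h := (((hL ((x - y) / T)).comp x
    (((hasDerivAt_id' x).sub_const y).div_const T)).const_mul T).const_add c
  exact h.congr_deriv (by field_simp)

theorem viscSuper1_Splus1 {g : ℝ → ℝ} (hT : 0 < T) (hLd : ∀ q, HasDerivAt L (P q) q)
    (hPd : ∀ q, HasDerivAt P (deriv (deriv H) (P q))⁻¹ q)
    (hbdd : ∀ x, BddBelow (range fun y => g y + T * L ((x - y) / T)))
    (hattain : ∀ x, ∃ y, Splus1 T L g x = g y + T * L ((x - y) / T))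
    (hu : ∀ x, u x ≤ Splus1 T L g x) : ViscSuper1 T H u (Splus1 T L g) := by
  intro φ hφ x₀ hmin heq
  refine ⟨heq ▸ hu x₀, ?_⟩
  obtain ⟨y₀, hy₀⟩ := hattain x₀
  have htouch : IsLocalMin (fun x => (g y₀ + T * L ((x - y₀) / T)) - φ x) x₀ := by
    filter_upwards [hmin] with x hx
    have : Splus1 T L g x ≤ g y₀ + T * L ((x - y₀) / T) := ciInf_le (hbdd x) y₀
    linarith
  obtain ⟨hd, hdd⟩ := htouch.hasDerivAt_eq_and_le_of_sub
    (hasDerivAt_add_mul_comp_sub_div hT.ne' hLd _ y₀)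
    (fun x => (hφ.differentiable two_ne_zero x).hasDerivAt)
    ((hPd _).comp x₀ (((hasDerivAt_id' x₀).sub_const y₀).div_const T))
    (hφ.differentiable_deriv_two x₀).hasDerivAt
  rw [← hd]
  exact hdd.trans_eq (by ring)

theorem eventually_Splus1_Sminus1_eq (hT : 0 < T) (hLc : Continuous L)
    (hL : Superlinear L)
    (hinc : ∀ h, 0 < h → StrictMono fun q => L (q + h) - L q) (hu : LipschitzWith K u)
    {x₀ y₀ : ℝ} (hx₀ : u x₀ < Splus1 T L (Sminus1 T L u) x₀)
    (hy₀ : Splus1 T L (Sminus1 T L u) x₀ = Sminus1 T L u y₀ + T * L ((x₀ - y₀) / T)) :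
    ∀ᶠ x in 𝓝 x₀, Splus1 T L (Sminus1 T L u) x = Sminus1 T L u y₀ + T * L ((x - y₀) / T) := by
  set w := Sminus1 T L u
  set v := Splus1 T L w
  have hw : LipschitzWith K w := lipschitzWith_Sminus1 hT hL hu
  have hv : Continuous v := (lipschitzWith_Splus1 hT hL hw).continuous
  have hwc := hw.continuous
  let G : Set (ℝ × ℝ) := {p | v p.1 = w p.2 + T * L ((p.1 - p.2) / T)}
  have hG : IsClosed G := isClosed_eq (by fun_prop) (by fun_prop)
  have hC : IsClosed {z | v z = u z} := isClosed_eq hv hu.continuous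
  have hmono : ∀ p ∈ G, ∀ q ∈ G, p.1 < q.1 → p.2 ≤ q.2 := fun p hp q hq =>
    le_of_Splus1_eq_of_lt hT hinc (bddBelow_Splus1 hT hL hw) hp hq
  obtain ⟨R, hR⟩ := exists_contact_Splus1_Sminus1 hT hLc hL hu
  have hcontact : ∀ y, ∃ z ∈ {z | v z = u z}, |z - y| ≤ R ∧ (z, y) ∈ G := fun y => by
    obtain ⟨z, hzy, hzu, hzG⟩ := hR y
    exact ⟨z, hzu, hzy, hzG⟩
  obtain ⟨z₁, hz₁u, hz₁, hz₁G⟩ := exists_le_of_monotone_rel hG hC hmono hcontact hy₀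
  obtain ⟨z₂, hz₂u, hz₂, hz₂G⟩ := exists_ge_of_monotone_rel hG hC hmono hcontact hy₀
  have hne : ∀ z, v z = u z → z ≠ x₀ := by
    rintro z hz rfl
    exact hx₀.ne' hz
  filter_upwards [Ioo_mem_nhds (hz₁.lt_of_ne (hne _ hz₁u)) (hz₂.lt_of_ne' (hne _ hz₂u))]
    with x ⟨h₁, h₂⟩
  obtain ⟨y, hy⟩ := exists_Splus1_eq hT hLc hL hw x
  have hyy : y = y₀ :=
    le_antisymm (hmono (x, y) hy (z₂, y₀) hz₂G h₂) (hmono (z₁, y₀) hz₁G (x, y) hy h₁)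
  rwa [hyy] at hy

theorem viscSub1_Splus1_Sminus1 (hT : 0 < T) (hLc : Continuous L)
    (hL : Superlinear L) (hLd : ∀ q, HasDerivAt L (P q) q)
    (hPmono : StrictMono P) (hPd : ∀ q, HasDerivAt P (deriv (deriv H) (P q))⁻¹ q)
    (hu : LipschitzWith K u) : ViscSub1 T H u (Splus1 T L (Sminus1 T L u)) := by
  intro φ hφ x₀ hmax heq
  refine or_iff_not_imp_left.2 fun hx₀ => ?_
  obtain ⟨y₀, hy₀⟩ := exists_Splus1_eq hT hLc hL (lipschitzWith_Sminus1 hT hL hu) x₀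
  have hη := eventually_Splus1_Sminus1_eq hT hLc hL
    (fun _ hh => strictMono_sub_comp_add hLd hPmono hh) hu (heq ▸ lt_of_not_ge hx₀) hy₀
  have htouch : IsLocalMin (fun x => φ x - (Sminus1 T L u y₀ + T * L ((x - y₀) / T))) x₀ := by
    filter_upwards [hmax, hη] with x hx hxη
    linarith
  obtain ⟨hd, hdd⟩ := htouch.hasDerivAt_eq_and_le_of_sub
    (fun x => (hφ.differentiable two_ne_zero x).hasDerivAt)
    (hasDerivAt_add_mul_comp_sub_div hT.ne' hLd _ y₀)
    (hφ.differentiable_deriv_two x₀).hasDerivAt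
    ((hPd _).comp x₀ (((hasDerivAt_id' x₀).sub_const y₀).div_const T))
  rw [hd]
  exact hdd.trans_eq' (by ring)

end Viscosity

/-- In one dimension, `u_T^* := S_T^+(S_T^- u_T)` is a viscosity solution
(both super- and subsolution) of the obstacle problem
`min{v - u_T, -∂ₓₓv + (T·H''(∂ₓv))⁻¹} = 0`. -/
theorem semiconcave_envelope_viscosity_solution_1D
    (T : ℝ) (hT : 0 < T)
    (H : ℝ → ℝ) (hH : ContDiff ℝ 2 H)
    (hHconv : ∀ p : ℝ, 0 < deriv (deriv H) p)
    (hHsuper : Tendsto (fun p : ℝ => H p / |p|) (cocompact ℝ) atTop)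
    (uT : ℝ → ℝ) (huT : IsLip1 uT) :
    ViscSuper1 T H uT (Splus1 T (legendre1 H) (Sminus1 T (legendre1 H) uT)) ∧
      ViscSub1 T H uT (Splus1 T (legendre1 H) (Sminus1 T (legendre1 H) uT)) := by
  obtain ⟨K, hK⟩ := huT
  obtain ⟨P, hPmono, hP, hPd⟩ := exists_strictMono_rightInverse_deriv hH hHconv hHsuper
  have hHd : Differentiable ℝ H := hH.differentiable two_ne_zero
  have hmono : Monotone (deriv H) := (strictMono_of_deriv_pos hHconv).monotone
  have hLd : ∀ q, HasDerivAt (legendre1 H) (P q) q := fun q =>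
    hasDerivAt_legendre1 hHd hmono hP (hPd q)
  have hLc : Continuous (legendre1 H) :=
    continuous_iff_continuousAt.2 fun q => (hLd q).continuousAt
  have hL := superlinear_legendre1 hHd hmono hP
  have hw := lipschitzWith_Sminus1 hT hL hK
  exact ⟨viscSuper1_Splus1 hT hLd hPd (bddBelow_Splus1 hT hL hw) (exists_Splus1_eq hT hLc hL hw)
      (le_Splus1_Sminus1 hT hL hK),
    viscSub1_Splus1_Sminus1 hT hLc hL hLd hPmono hPd hK⟩
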